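/- Let G^{A,B} be a biconed graph, T a spanning tree of G^{A,B}, and e a connecting edge of T with connecting vertex v such that the component C of v in T ∖ T_0 contains no connecting vertex other than v. Then e is internally active in T if and only if v is the smallest vertex of C with respect to the fixed vertex order. -/

import Mathlib

/-!
Formalization scaffold for "h-vectors of graphic matroids of biconed graphs".

A graph `G` (loops and parallel edges allowed) with vertex set `A ∪ B` is
modelled by an abstract finite edge type `E` with an endpoint map
`ends : E → Sym2 (Fin m ⊕ₗ Fin n)`, where `A = Fin m = {1,…,m}`,
`Ā = B \ A = Fin n = {1̄,…,n̄}` and the finset `S ⊆ Fin m` records `A ∩ B`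
(so `B = S ∪ Ā`).  The biconing `G^{A,B}` adds the two vertices `0` and `0̄`
and the edges `00̄`, `0a (a ∈ A)` and `0̄b (b ∈ B)`.
-/

namespace BiconedPaper

noncomputable section
open scoped Classical

/-! ### Walks in multigraphs presented by an endpoint map -/

/-- A walk in the multigraph with edge set `ε` and endpoint map `ends`. -/
inductive MWalk {ε ν : Type} (ends : ε → Sym2 ν) : ν → ν → Type
  | nil (u : ν) : MWalk ends u u
  | cons {u w : ν} (e : ε) (v : ν) (h : ends e = s(u, v)) (p : MWalk ends v w) :
      MWalk ends u w

namespace MWalk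

variable {ε ν : Type} {ends : ε → Sym2 ν}

/-- The list of edges traversed by a walk. -/
def edges : ∀ {u v : ν}, MWalk ends u v → List ε
  | _, _, nil _ => []
  | _, _, cons e _ _ p => e :: p.edges

/-- The list of vertices visited by a walk. -/
def support : ∀ {u v : ν}, MWalk ends u v → List ν
  | u, _, nil _ => [u]
  | u, _, cons _ _ _ p => u :: p.support

/-- A walk is a path if it visits no vertex twice. -/
def IsPath {u v : ν} (p : MWalk ends u v) : Prop := p.support.Nodup

/-- All edges of the walk belong to the edge set `F`. -/
def edgesIn {u v : ν} (p : MWalk ends u v) (F : Finset ε) : Prop :=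
  ∀ e ∈ p.edges, e ∈ F

/-- The number of "bridging" edges traversed by a walk, i.e. steps whose two
endpoints lie on different sides according to `sideF`. -/
def bridgeCount (sideF : ν → Bool) : ∀ {u v : ν}, MWalk ends u v → ℕ
  | _, _, nil _ => 0
  | u, _, cons _ v' _ p => (if sideF u = sideF v' then 0 else 1) + p.bridgeCount sideF

end MWalk

/-- `u` and `v` are joined by a walk all of whose edges lie in `F`. -/
def Reachable {ε ν : Type} (ends : ε → Sym2 ν) (F : Finset ε) (u v : ν) : Prop :=
  ∃ p : MWalk ends u v, p.edgesIn F

/-- An edge set is acyclic (a forest) iff removing any one of its edges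
disconnects the endpoints of that edge.  (In particular no loops and no
parallel pairs.) -/
def IsAcyclic {ε ν : Type} [DecidableEq ε] (ends : ε → Sym2 ν) (F : Finset ε) : Prop :=
  ∀ e ∈ F, ∀ u v : ν, ends e = s(u, v) → ¬ Reachable ends (F.erase e) u v

/-- A spanning tree: an acyclic edge set connecting every pair of vertices. -/
def IsSpanningTree {ε ν : Type} [DecidableEq ε] (ends : ε → Sym2 ν) (T : Finset ε) : Prop :=
  IsAcyclic ends T ∧ ∀ u v : ν, Reachable ends T u v

/-! ### Biconed graphs -/

/-- The data of a biconed graph `G^{A,B}`:  the graph `G` has vertex set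
`A ∪ B` with `A = Fin m`, `Ā = B \ A = Fin n`, `A ∩ B = S`, and abstract
edge set `E` (so loops and parallel edges are allowed). -/
structure BiconedGraph where
  m : ℕ
  n : ℕ
  E : Type
  fintypeE : Fintype E
  decEqE : DecidableEq E
  ends : E → Sym2 (Fin m ⊕ₗ Fin n)
  S : Finset (Fin m)

namespace BiconedGraph

variable (P : BiconedGraph)

instance : Fintype P.E := P.fintypeE
instance : DecidableEq P.E := P.decEqE

/-- The vertices of `G`, linearly ordered `1 < ⋯ < m < 1̄ < ⋯ < n̄`. -/
abbrev VG := Fin P.m ⊕ₗ Fin P.n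

/-- The vertices of `G^{A,B}_red`:  `⊥` is the vertex `0̄`, ordered
`0̄ < 1 < ⋯ < m < 1̄ < ⋯ < n̄`. -/
abbrev Vred := WithBot P.VG

/-- The vertices of `G^{A,B}`: `⊥` is `0`, ordered `0 < 0̄ < 1 < ⋯ < n̄`. -/
abbrev W := WithBot P.Vred

/-- The vertex `a ∈ A`. -/
def aVert (a : Fin P.m) : P.VG := toLex (Sum.inl a)
/-- The vertex `b ∈ Ā`. -/
def bVert (b : Fin P.n) : P.VG := toLex (Sum.inr b)
/-- Inclusion of the vertices of `G` into those of `G^{A,B}_red`. -/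
def liftV (x : P.VG) : P.Vred := (x : WithBot P.VG)
/-- Inclusion of the vertices of `G^{A,B}_red` into those of `G^{A,B}`. -/
def liftW (x : P.Vred) : P.W := (x : WithBot P.Vred)

/-- The edges of the biconed graph `G^{A,B}`:  the edge `00̄`, the coning
edges `0a (a ∈ A)`, `0̄b (b ∈ Ā)`, `0̄a (a ∈ A ∩ B)`, and the edges of `G`. -/
abbrev EB := Unit ⊕ (Fin P.m ⊕ (Fin P.n ⊕ ({a : Fin P.m // a ∈ P.S} ⊕ P.E)))

/-- The edge `00̄`. -/
abbrev e00 : P.EB := Sum.inl ()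
/-- The coning edge `0a`, `a ∈ A`. -/
abbrev eA (a : Fin P.m) : P.EB := Sum.inr (Sum.inl a)
/-- The coning edge `0̄b`, `b ∈ Ā`. -/
abbrev eB (b : Fin P.n) : P.EB := Sum.inr (Sum.inr (Sum.inl b))
/-- The coning edge `0̄a`, `a ∈ A ∩ B`. -/
abbrev eS (a : {a : Fin P.m // a ∈ P.S}) : P.EB := Sum.inr (Sum.inr (Sum.inr (Sum.inl a)))
/-- An original edge of `G`. -/
abbrev eG (e : P.E) : P.EB := Sum.inr (Sum.inr (Sum.inr (Sum.inr e)))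

/-- The endpoint map of `G^{A,B}`. -/
def endsB : P.EB → Sym2 P.W
  | Sum.inl _ => s((⊥ : P.W), P.liftW ⊥)
  | Sum.inr (Sum.inl a) => s((⊥ : P.W), P.liftW (P.liftV (P.aVert a)))
  | Sum.inr (Sum.inr (Sum.inl b)) => s(P.liftW ⊥, P.liftW (P.liftV (P.bVert b)))
  | Sum.inr (Sum.inr (Sum.inr (Sum.inl a))) => s(P.liftW ⊥, P.liftW (P.liftV (P.aVert a.1)))
  | Sum.inr (Sum.inr (Sum.inr (Sum.inr e))) => (P.ends e).map fun x => P.liftW (P.liftV x)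

/-- The spanning tree `T₀`, consisting of `00̄`, the edges `0a (a ∈ A)` and
the edges `0̄b (b ∈ Ā)`. -/
def T0 : Finset P.EB :=
  Finset.univ.filter fun e => match e with
    | Sum.inl _ => True
    | Sum.inr (Sum.inl _) => True
    | Sum.inr (Sum.inr (Sum.inl _)) => True
    | _ => False

/-- The edges of `G^{A,B}_red` (delete the edges of `T₀` and the vertex `0`):
the edges `0̄a (a ∈ A ∩ B)` together with the edges of `G`. -/
abbrev Ered := {a : Fin P.m // a ∈ P.S} ⊕ P.E

/-- The endpoint map of `G^{A,B}_red`; `⊥` is the vertex `0̄`. -/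
def endsRed : P.Ered → Sym2 P.Vred
  | Sum.inl a => s((⊥ : P.Vred), P.liftV (P.aVert a.1))
  | Sum.inr e => (P.ends e).map P.liftV

/-- Inclusion of the edges of `G^{A,B}_red` into those of `G^{A,B}`. -/
def redToEB : P.Ered → P.EB
  | Sum.inl a => P.eS a
  | Sum.inr e => P.eG e

/-- The edge set `T \ T₀` of `T`, viewed inside `G^{A,B}_red`. -/
def redOf (T : Finset P.EB) : Finset P.Ered :=
  Finset.univ.filter fun e => P.redToEB e ∈ T

/-- `true` on the vertices of `A`, `false` on the vertices of `Ā ∪ {0̄}`. -/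
def side : P.Vred → Bool :=
  WithBot.recBotCoe false fun x => Sum.elim (fun _ => true) (fun _ => false) (ofLex x)

/-- The vertex lies in `A`. -/
def InA (v : P.Vred) : Prop := ∃ a : Fin P.m, v = P.liftV (P.aVert a)

/-- An edge of `G^{A,B}_red` is bridging if it joins a vertex of `A` to a
vertex of `Ā ∪ {0̄}`. -/
def BridgingE (e : P.Ered) : Prop :=
  ∃ u v : P.Vred, P.endsRed e = s(u, v) ∧ P.side u ≠ P.side v

/-! ### 2-edge-rooted forests -/

/-- The underlying edge set `F` of the multiset of edges given by the
multiplicity function `mult` (an edge `e` carries `mult e - 1` edge roots). -/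
def mSupport (mult : P.Ered → ℕ) : Finset P.Ered :=
  Finset.univ.filter fun e => mult e ≠ 0

/-- The degree of the multiset of edges given by `mult`. -/
def deg (mult : P.Ered → ℕ) : ℕ := ∑ e : P.Ered, mult e

/-- Edge `e` meets the connected component of `v` in the edge set `F`. -/
def Touches (F : Finset P.Ered) (v : P.Vred) (e : P.Ered) : Prop :=
  ∃ u : P.Vred, u ∈ P.endsRed e ∧ Reachable P.endsRed F v u

/-- The total number of edge roots in the component of `v`. -/
def compEdgeRoots (mult : P.Ered → ℕ) (v : P.Vred) : ℕ :=
  ∑ e ∈ P.mSupport mult, if P.Touches (P.mSupport mult) v e then mult e - 1 else 0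

/-- The component of `v` is `compCount`-edge-rooted:  the number of its edge
roots, plus `1` if it contains the vertex `0̄`. -/
def compCount (mult : P.Ered → ℕ) (v : P.Vred) : ℕ :=
  P.compEdgeRoots mult v +
    if Reachable P.endsRed (P.mSupport mult) v (⊥ : P.Vred) then 1 else 0

/-- Condition (C3) for the `2`-edge-rooted component of `v`:  the unique
shortest path containing both edge roots (resp. the vertex `0̄` and the edge
root, if the component contains `0̄`) has an odd number of bridging edges.
The shortest path containing two edges is the unique path whose first and
last edges are the two rooted edges; if the two edge roots lie on one common
edge (`mult e = 3`) the path is that single edge. -/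
def C3At (mult : P.Ered → ℕ) (v : P.Vred) : Prop :=
  (Reachable P.endsRed (P.mSupport mult) v (⊥ : P.Vred) →
    ∃ (x : P.Vred) (p : MWalk P.endsRed (⊥ : P.Vred) x),
      p.IsPath ∧ p.edgesIn (P.mSupport mult) ∧
      (∃ e, p.edges.getLast? = some e ∧ 2 ≤ mult e) ∧
      Odd (p.bridgeCount P.side)) ∧
  (¬ Reachable P.endsRed (P.mSupport mult) v (⊥ : P.Vred) →
    ∃ (x y : P.Vred) (p : MWalk P.endsRed x y),
      p.IsPath ∧ p.edgesIn (P.mSupport mult) ∧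
      Reachable P.endsRed (P.mSupport mult) v x ∧
      (∃ e, p.edges.head? = some e ∧ 2 ≤ mult e) ∧
      (∃ e, p.edges.getLast? = some e ∧ 2 ≤ mult e) ∧
      (∀ e, p.edges = [e] → mult e = 3) ∧
      Odd (p.bridgeCount P.side))

/-- `mult : Ered → ℕ` is (the multiplicity function of) a 2-edge-rooted
forest of `G^{A,B}_red`:
(C0) its support is a spanning forest;
(C1) at most one component is `2`-edge-rooted;
(C2) every other component is `0`- or `1`-edge-rooted;
(C3) the parity condition on the path joining the two roots. -/
def Is2ERF (mult : P.Ered → ℕ) : Prop :=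
  IsAcyclic P.endsRed (P.mSupport mult) ∧
  (∀ v : P.Vred, P.compCount mult v ≤ 2) ∧
  (∀ u v : P.Vred, P.compCount mult u = 2 → P.compCount mult v = 2 →
    Reachable P.endsRed (P.mSupport mult) u v) ∧
  (∀ v : P.Vred, P.compCount mult v = 2 → P.C3At mult v)

/-! ### Birooted forests -/

/-- `(F, R)` is a birooted forest of `G^{A,B}_red`:  `F` is a spanning forest,
the root set `R` contains `0̄`, every component of `F` contains at least one
root, no component contains three roots, at most one component contains two
roots, and a component with two roots has one root in `A` and the other in
`Ā ∪ {0̄}`. -/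
def IsBirootedForest (F : Finset P.Ered) (R : Set P.Vred) : Prop :=
  IsAcyclic P.endsRed F ∧
  (⊥ : P.Vred) ∈ R ∧
  (∀ v : P.Vred, ∃ r ∈ R, Reachable P.endsRed F v r) ∧
  (∀ r₁ ∈ R, ∀ r₂ ∈ R, ∀ r₃ ∈ R, r₁ ≠ r₂ → r₁ ≠ r₃ → r₂ ≠ r₃ →
    Reachable P.endsRed F r₁ r₂ → Reachable P.endsRed F r₁ r₃ → False) ∧
  (∀ r₁ ∈ R, ∀ r₂ ∈ R, ∀ r₃ ∈ R, ∀ r₄ ∈ R, r₁ ≠ r₂ → r₃ ≠ r₄ →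
    Reachable P.endsRed F r₁ r₂ → Reachable P.endsRed F r₃ r₄ →
    Reachable P.endsRed F r₁ r₃) ∧
  (∀ r₁ ∈ R, ∀ r₂ ∈ R, r₁ ≠ r₂ → Reachable P.endsRed F r₁ r₂ →
    (P.InA r₁ ∧ ¬ P.InA r₂) ∨ (P.InA r₂ ∧ ¬ P.InA r₁))

/-! ### Internal activity and the edge order -/

/-- `e` is internally passive in the spanning tree `T`:  it can be exchanged
for a strictly smaller edge `f` so that the result is again a spanning tree. -/
def InternallyPassive (ord : LinearOrder P.EB) (T : Finset P.EB) (e : P.EB) : Prop :=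
  e ∈ T ∧ ∃ f : P.EB, ord.lt f e ∧ IsSpanningTree P.endsB (insert f (T.erase e))

/-- `e` is internally active in the spanning tree `T`. -/
def InternallyActive (ord : LinearOrder P.EB) (T : Finset P.EB) (e : P.EB) : Prop :=
  e ∈ T ∧ ¬ ∃ f : P.EB, ord.lt f e ∧ IsSpanningTree P.endsB (insert f (T.erase e))

/-- The number of internally passive edges of `T`. -/
def ipCount (ord : LinearOrder P.EB) (T : Finset P.EB) : ℕ :=
  (T.filter fun e => P.InternallyPassive ord T e).card

/-- The smaller endpoint of an edge of `G^{A,B}`. -/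
def endMin (e : P.EB) : P.W := Sym2.lift ⟨fun a b => a ⊓ b, fun a b => inf_comm a b⟩ (P.endsB e)
/-- The larger endpoint of an edge of `G^{A,B}`. -/
def endMax (e : P.EB) : P.W := Sym2.lift ⟨fun a b => a ⊔ b, fun a b => sup_comm a b⟩ (P.endsB e)

/-- The endpoints of an edge, as an ordered pair in the lexicographic square
of the vertex order `0 < 0̄ < 1 < ⋯ < m < 1̄ < ⋯ < n̄`. -/
def lexEnds (e : P.EB) : P.W ×ₗ P.W := toLex (P.endMin e, P.endMax e)

/-- A linear order on the edges of `G^{A,B}` is admissible if it refines the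
lexicographic order on endpoints (so parallel edges are ordered arbitrarily). -/
def AdmissibleOrder (ord : LinearOrder P.EB) : Prop :=
  ∀ e f : P.EB, P.lexEnds e < P.lexEnds f → ord.lt e f

/-- `v` is a connecting vertex of `T`:  `v ∈ A` and `v` is adjacent to `0` in
`T`, or `v ∈ Ā` and `v` is adjacent to `0̄` in `T`. -/
def ConnVertex (T : Finset P.EB) (v : P.Vred) : Prop :=
  (∃ a : Fin P.m, v = P.liftV (P.aVert a) ∧ P.eA a ∈ T) ∨
  (∃ b : Fin P.n, v = P.liftV (P.bVert b) ∧ P.eB b ∈ T)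

/-- `e` is a connecting edge of `T` (an edge `0a`, `a ∈ A`, or `0̄b`, `b ∈ Ā`)
with connecting vertex `v`. -/
def ConnEdge (T : Finset P.EB) (e : P.EB) (v : P.Vred) : Prop :=
  e ∈ T ∧ ((∃ a : Fin P.m, e = P.eA a ∧ v = P.liftV (P.aVert a)) ∨
           (∃ b : Fin P.n, e = P.eB b ∧ v = P.liftV (P.bVert b)))

/-! ### The h-vector -/

/-- `f_{i-1}`:  the number of acyclic edge sets of cardinality `i` in `G^{A,B}`. -/
def numAcyclic (i : ℕ) : ℕ :=
  Nat.card {F : Finset P.EB // IsAcyclic P.endsB F ∧ F.card = i}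

/-- The rank of the graphic matroid of `G^{A,B}`:  `|V| - 1 = m + n + 1`. -/
def d : ℕ := P.m + P.n + 1

/-- `h` is the h-vector of the graphic matroid of `G^{A,B}`:  it satisfies
`Σ_{i=0}^{d} f_{i-1} (t-1)^{d-i} = Σ_{k=0}^{d} h_k t^{d-k}`. -/
def IsHVector (h : ℕ → ℤ) : Prop :=
  ∑ i ∈ Finset.range (P.d + 1),
      Polynomial.C ((P.numAcyclic i : ℤ)) * (Polynomial.X - 1) ^ (P.d - i)
    = ∑ k ∈ Finset.range (P.d + 1), Polynomial.C (h k) * Polynomial.X ^ (P.d - k)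

end BiconedGraph

/-- `(h 0, …, h d)` is a pure O-sequence:  there is a multicomplex `M` of
multisets on a finite ground set (nonempty, closed under sub-multisets), all
of whose inclusion-maximal members have the same cardinality, whose members
all have cardinality at most `d`, and which has exactly `h i` members of
cardinality `i` for every `i ≤ d`. -/
def IsPureOSeq (d : ℕ) (h : ℕ → ℤ) : Prop :=
  ∃ (N : ℕ) (M : Set (Multiset (Fin N))),
    M.Nonempty ∧
    (∀ s ∈ M, ∀ t : Multiset (Fin N), t ≤ s → t ∈ M) ∧
    (∀ s ∈ M, ∀ t ∈ M, (∀ u ∈ M, s ≤ u → u = s) → (∀ u ∈ M, t ≤ u → u = t) →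
      Multiset.card s = Multiset.card t) ∧
    (∀ s ∈ M, Multiset.card s ≤ d) ∧
    (∀ i ≤ d, (Nat.card {s : Multiset (Fin N) // s ∈ M ∧ Multiset.card s = i} : ℤ) = h i)

/-!
Regard `T₀` as the tree rooted at `0` in which every other vertex `u` hangs from its parent by the
edge `t0Edge u`; the connecting edge `e` is `t0Edge v`. When `0̄ ∉ C`, the hypothesis on `C` makes
the component of `v` in `T \ e` exactly the image of `C`, and `T \ e + f` is a spanning tree iff
`f` leaves that component. If some `u ∈ C` is smaller than `v`, then `t0Edge u` joins the two
components of `T \ e` and precedes `e`. If `v` is the smallest vertex of `C`, every edge `f ≠ e` with an endpoint in `C`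
comes after `e`, because no edge of `T \ T₀` joins a vertex to its parent in `T₀`.
-/

section Reachability

variable {ε ν : Type} {ends : ε → Sym2 ν} {F F' : Finset ε} {u v w x y p q : ν}

def Adj (ends : ε → Sym2 ν) (F : Finset ε) (u v : ν) : Prop := ∃ g ∈ F, ends g = s(u, v)

theorem Adj.symm (h : Adj ends F u v) : Adj ends F v u :=
  let ⟨g, hg, huv⟩ := h
  ⟨g, hg, huv.trans Sym2.eq_swap⟩

theorem reachable_iff_reflTransGen :
    Reachable ends F u v ↔ Relation.ReflTransGen (Adj ends F) u v := by
  constructor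
  · rintro ⟨p, hp⟩
    induction p with
    | nil => exact .refl
    | cons g _ h _ ih =>
      exact .head ⟨g, hp g List.mem_cons_self, h⟩
        (ih fun e he => hp e (List.mem_cons_of_mem _ he))
  · intro h
    induction h using Relation.ReflTransGen.head_induction_on with
    | refl => exact ⟨.nil _, fun _ h => by simp [MWalk.edges] at h⟩
    | head hab _ ih =>
      obtain ⟨g, hg, h⟩ := hab
      obtain ⟨p, hp⟩ := ih
      exact ⟨.cons g _ h p, fun e he => (List.mem_cons.1 he).elim (· ▸ hg) (hp e)⟩

namespace Reachable

theorem refl (F : Finset ε) (u : ν) : Reachable ends F u u :=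
  reachable_iff_reflTransGen.2 .refl

theorem single (h : Adj ends F u v) : Reachable ends F u v :=
  reachable_iff_reflTransGen.2 (.single h)

theorem trans (h₁ : Reachable ends F u v) (h₂ : Reachable ends F v w) :
    Reachable ends F u w :=
  reachable_iff_reflTransGen.2
    ((reachable_iff_reflTransGen.1 h₁).trans (reachable_iff_reflTransGen.1 h₂))

theorem symm (h : Reachable ends F u v) : Reachable ends F v u := by
  rw [reachable_iff_reflTransGen] at h
  induction h with
  | refl => exact refl F u
  | tail _ hbc ih => exact (single hbc.symm).trans ih

theorem lift (hF : ∀ a b, Adj ends F a b → Reachable ends F' a b)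
    (h : Reachable ends F u v) : Reachable ends F' u v :=
  reachable_iff_reflTransGen.2 <| Relation.ReflTransGen.lift' id
    (fun a b hab => reachable_iff_reflTransGen.1 (hF a b hab)) _ _ (reachable_iff_reflTransGen.1 h)

theorem mono (hFF : F ⊆ F') (h : Reachable ends F u v) : Reachable ends F' u v :=
  h.lift fun _ _ ⟨g, hg, hab⟩ => single ⟨g, hFF hg, hab⟩

theorem map {ε' ν' : Type} {ends' : ε' → Sym2 ν'} {F' : Finset ε'} (φ : ν → ν') (ψ : ε → ε')
    (hends : ∀ g, ends' (ψ g) = (ends g).map φ) (hF : ∀ g ∈ F, ψ g ∈ F')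
    (h : Reachable ends F u v) : Reachable ends' F' (φ u) (φ v) := by
  rw [reachable_iff_reflTransGen] at h ⊢
  exact Relation.ReflTransGen.lift φ (fun a b ⟨g, hg, hab⟩ =>
    ⟨ψ g, hF g hg, by rw [hends, hab, Sym2.map_mk]⟩) _ _ h

theorem mem_of_closed {S : ν → Prop} (hS : ∀ a b, Adj ends F a b → S a → S b)
    (h : Reachable ends F u v) (hu : S u) : S v := by
  rw [reachable_iff_reflTransGen] at h
  induction h with
  | refl => exact hu
  | tail _ hbc ih => exact hS _ _ hbc ih

theorem of_insert [DecidableEq ε] {f : ε} (hf : ends f = s(p, q))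
    (h : Reachable ends (insert f F) u v) :
    Reachable ends F u v ∨ (Reachable ends F u p ∧ Reachable ends F q v) ∨
      (Reachable ends F u q ∧ Reachable ends F p v) := by
  rw [reachable_iff_reflTransGen] at h
  induction h with
  | refl => exact Or.inl (refl F u)
  | tail _ hbc ih =>
    obtain ⟨g, hg, hbc⟩ := hbc
    rcases Finset.mem_insert.1 hg with rfl | hg
    · rcases Sym2.eq_iff.1 (hf.symm.trans hbc) with ⟨rfl, rfl⟩ | ⟨rfl, rfl⟩
      · rcases ih with h | ⟨h, -⟩ | ⟨h, -⟩
        exacts [Or.inr (Or.inl ⟨h, refl F _⟩), Or.inr (Or.inl ⟨h, refl F _⟩), Or.inl h]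
      · rcases ih with h | ⟨h, -⟩ | ⟨h, -⟩
        exacts [Or.inr (Or.inr ⟨h, refl F _⟩), Or.inl h, Or.inr (Or.inr ⟨h, refl F _⟩)]
    · have hbc : Reachable ends F _ _ := single ⟨g, hg, hbc⟩
      rcases ih with h | ⟨h₁, h₂⟩ | ⟨h₁, h₂⟩
      exacts [Or.inl (h.trans hbc), Or.inr (Or.inl ⟨h₁, h₂.trans hbc⟩),
        Or.inr (Or.inr ⟨h₁, h₂.trans hbc⟩)]

end Reachable

namespace IsSpanningTree

variable [DecidableEq ε] {T : Finset ε} {e f : ε}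

theorem reachable_erase_or (hT : IsSpanningTree ends T) (hxy : ends e = s(x, y)) (w : ν) :
    Reachable ends (T.erase e) x w ∨ Reachable ends (T.erase e) y w := by
  have hw := (hT.2 x w).mono (Finset.insert_erase_subset e T)
  rcases hw.of_insert hxy with h | ⟨-, h⟩ | ⟨-, h⟩
  exacts [Or.inl h, Or.inr h, Or.inl h]

theorem exists_reachable_erase_of_exchange (hT : IsSpanningTree ends T) (he : e ∈ T)
    (hxy : ends e = s(x, y)) (hT' : IsSpanningTree ends (insert f (T.erase e))) :
    ∃ p q, ends f = s(p, q) ∧ Reachable ends (T.erase e) y q := by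
  obtain ⟨p, q, hf⟩ : ∃ p q, ends f = s(p, q) := Sym2.inductionOn (ends f) fun a b => ⟨a, b, rfl⟩
  rcases (hT'.2 x y).of_insert hf with h | ⟨-, h⟩ | ⟨-, h⟩
  exacts [absurd h (hT.1 e he x y hxy), ⟨p, q, hf, h.symm⟩, ⟨q, p, hf.trans Sym2.eq_swap, h.symm⟩]

theorem exchange (hT : IsSpanningTree ends T) (he : e ∈ T) (hxy : ends e = s(x, y))
    (hf : ends f = s(p, q)) (hxp : Reachable ends (T.erase e) x p)
    (hyq : Reachable ends (T.erase e) y q) : IsSpanningTree ends (insert f (T.erase e)) := by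
  have hpq : ¬ Reachable ends (T.erase e) p q := fun hpq =>
    hT.1 e he x y hxy (hxp.trans (hpq.trans hyq.symm))
  have hfT : f ∉ T.erase e := fun hfT => hpq (.single ⟨f, hfT, hf⟩)
  constructor
  · intro g hg a b hab hr
    rcases Finset.mem_insert.1 hg with rfl | hg
    · rw [Finset.erase_insert hfT] at hr
      rcases Sym2.eq_iff.1 (hf.symm.trans hab) with ⟨rfl, rfl⟩ | ⟨rfl, rfl⟩
      exacts [hpq hr, hpq hr.symm]
    · rw [Finset.erase_insert_of_ne (ne_of_mem_of_not_mem hg hfT).symm] at hr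
      have hab' : Reachable ends (T.erase e) a b := .single ⟨g, hg, hab⟩
      have hsub : (T.erase e).erase g ⊆ T.erase e := Finset.erase_subset g _
      rcases hr.of_insert hf with h | ⟨h₁, h₂⟩ | ⟨h₁, h₂⟩
      · refine hT.1 g (Finset.mem_of_mem_erase hg) a b hab (h.mono ?_)
        exact Finset.erase_subset_erase g (Finset.erase_subset e T)
      · exact hpq ((h₁.mono hsub).symm.trans (hab'.trans (h₂.mono hsub).symm))
      · exact hpq ((h₂.mono hsub).trans (hab'.symm.trans (h₁.mono hsub)))
  · have hxy' : Reachable ends (insert f (T.erase e)) x y :=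
      (hxp.mono (Finset.subset_insert f _)).trans
        ((Reachable.single ⟨f, Finset.mem_insert_self f _, hf⟩).trans
          (hyq.mono (Finset.subset_insert f _)).symm)
    refine fun a b => (hT.2 a b).lift fun c d ⟨g, hg, hcd⟩ => ?_
    by_cases hge : g = e
    · subst hge
      rcases Sym2.eq_iff.1 (hxy.symm.trans hcd) with ⟨rfl, rfl⟩ | ⟨rfl, rfl⟩
      exacts [hxy', hxy'.symm]
    · exact .single ⟨g, Finset.mem_insert_of_mem (Finset.mem_erase.2 ⟨hge, hg⟩), hcd⟩

end IsSpanningTree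

end Reachability

namespace BiconedGraph

variable (P : BiconedGraph)

/-- `T₀` is the tree rooted at `0` in which `0̄` and the vertices of `A` are children of `0` and
the vertices of `Ā` are children of `0̄`; `t0Edge u` joins `u` to its parent `t0Parent u`. -/
def t0Edge : P.Vred → P.EB :=
  WithBot.recBotCoe P.e00 fun x => Sum.elim P.eA P.eB (ofLex x)

def t0Parent : P.Vred → P.W :=
  WithBot.recBotCoe ⊥ fun x => Sum.elim (fun _ => ⊥) (fun _ => P.liftW ⊥) (ofLex x)

variable {P} {T : Finset P.EB} {e f : P.EB} {u v w : P.Vred}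

theorem endsB_t0Edge (u : P.Vred) : P.endsB (P.t0Edge u) = s(P.t0Parent u, P.liftW u) := by
  cases u using WithBot.recBotCoe with
  | bot => rfl
  | coe x => cases x <;> rfl

theorem t0Parent_eq_bot_or (u : P.Vred) : P.t0Parent u = ⊥ ∨ P.t0Parent u = P.liftW ⊥ := by
  cases u using WithBot.recBotCoe with
  | bot => exact Or.inl rfl
  | coe x => cases x with
    | inl => exact Or.inl rfl
    | inr => exact Or.inr rfl

theorem t0Parent_le (u : P.Vred) : P.t0Parent u ≤ P.liftW ⊥ := by
  rcases P.t0Parent_eq_bot_or u with h | h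
  exacts [h ▸ bot_le, h.le]

theorem eq_bot_of_liftW_eq_t0Parent (h : P.liftW w = P.t0Parent u) : w = ⊥ :=
  le_bot_iff.1 (WithBot.coe_le_coe.1 (h.trans_le (P.t0Parent_le u)))

theorem t0Parent_lt_liftW (u : P.Vred) : P.t0Parent u < P.liftW u := by
  cases u using WithBot.recBotCoe with
  | bot => exact WithBot.bot_lt_coe _
  | coe x => cases x with
    | inl => exact WithBot.bot_lt_coe _
    | inr => exact WithBot.coe_lt_coe.2 (WithBot.bot_lt_coe _)

theorem t0Parent_mono : Monotone P.t0Parent := by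
  intro u v huv
  cases v using WithBot.recBotCoe with
  | bot => rw [le_bot_iff.1 huv]
  | coe y => cases y with
    | inr => exact P.t0Parent_le u
    | inl a => cases u using WithBot.recBotCoe with
      | bot => exact le_rfl
      | coe x => cases x with
        | inl => exact le_rfl
        | inr b => exact absurd (WithBot.coe_le_coe.1 huv) (Sum.Lex.inl_lt_inr a b).not_ge

theorem lexEnds_eq {c d : P.W} (h : P.endsB f = s(c, d)) :
    P.lexEnds f = toLex (c ⊓ d, c ⊔ d) := by
  simp [lexEnds, endMin, endMax, h]

theorem lexEnds_t0Edge (u : P.Vred) :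
    P.lexEnds (P.t0Edge u) = toLex (P.t0Parent u, P.liftW u) := by
  have h := (P.t0Parent_lt_liftW u).le
  rw [lexEnds_eq (P.endsB_t0Edge u), inf_eq_left.2 h, sup_eq_right.2 h]

theorem lexEnds_t0Edge_lt (h : u < v) : P.lexEnds (P.t0Edge u) < P.lexEnds (P.t0Edge v) := by
  rw [lexEnds_t0Edge, lexEnds_t0Edge]
  exact Prod.Lex.toLex_strictMono (Prod.mk_lt_mk_of_le_of_lt (P.t0Parent_mono h.le)
    (WithBot.coe_lt_coe.2 h))

theorem ConnEdge.eq_t0Edge (h : P.ConnEdge T e v) : e = P.t0Edge v ∧ v ≠ ⊥ := by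
  rcases h.2 with ⟨a, rfl, rfl⟩ | ⟨b, rfl, rfl⟩
  exacts [⟨rfl, WithBot.coe_ne_bot⟩, ⟨rfl, WithBot.coe_ne_bot⟩]

theorem connVertex_of_t0Edge_mem (hu : u ≠ ⊥) (h : P.t0Edge u ∈ T) : P.ConnVertex T u := by
  cases u using WithBot.recBotCoe with
  | bot => exact absurd rfl hu
  | coe x => cases x with
    | inl a => exact Or.inl ⟨a, rfl, h⟩
    | inr b => exact Or.inr ⟨b, rfl, h⟩

theorem eq_t0Edge_or_eq_redToEB (f : P.EB) : (∃ u, f = P.t0Edge u) ∨ ∃ r, f = P.redToEB r := by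
  rcases f with _ | a | b | a | g
  exacts [Or.inl ⟨⊥, rfl⟩, Or.inl ⟨P.liftV (P.aVert a), rfl⟩, Or.inl ⟨P.liftV (P.bVert b), rfl⟩,
    Or.inr ⟨.inl a, rfl⟩, Or.inr ⟨.inr g, rfl⟩]

theorem redToEB_ne_t0Edge (r : P.Ered) (u : P.Vred) : P.redToEB r ≠ P.t0Edge u := by
  cases u using WithBot.recBotCoe with
  | bot => cases r <;> nofun
  | coe x => cases x <;> cases r <;> nofun

theorem endsB_redToEB (r : P.Ered) : P.endsB (P.redToEB r) = (P.endsRed r).map P.liftW := by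
  cases r with
  | inl a => rfl
  | inr g => exact (Sym2.map_map _).symm

theorem t0Parent_lt_of_endsRed {r : P.Ered} (h : P.endsRed r = s(u, v)) :
    P.t0Parent v < P.liftW u := by
  by_cases hu : u = ⊥
  · subst hu
    cases r with
    | inl a =>
      rcases Sym2.eq_iff.1 h with ⟨-, rfl⟩ | ⟨-, h⟩
      exacts [WithBot.bot_lt_coe _, absurd h WithBot.coe_ne_bot]
    | inr g =>
      obtain ⟨z₁, z₂, hz⟩ : ∃ z₁ z₂, P.ends g = s(z₁, z₂) :=
        Sym2.inductionOn (P.ends g) fun a b => ⟨a, b, rfl⟩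
      have h : s(P.liftV z₁, P.liftV z₂) = s(⊥, v) := by
        rw [← Sym2.map_mk, ← hz]; exact h
      rcases Sym2.eq_iff.1 h with ⟨h, -⟩ | ⟨-, h⟩ <;> exact absurd h WithBot.coe_ne_bot
  · exact (P.t0Parent_le v).trans_lt (WithBot.coe_lt_coe.2 (bot_lt_iff_ne_bot.2 hu))

theorem reachable_erase_t0Edge_liftW (h : Reachable P.endsRed (P.redOf T) u w) :
    Reachable P.endsB (T.erase (P.t0Edge v)) (P.liftW u) (P.liftW w) :=
  h.map P.liftW P.redToEB P.endsB_redToEB fun r hr =>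
    Finset.mem_erase.2 ⟨P.redToEB_ne_t0Edge r v, by simpa [redOf] using hr⟩

theorem exists_eq_liftW_of_reachable_erase_t0Edge
    (honly : ∀ u, Reachable P.endsRed (P.redOf T) v u → P.ConnVertex T u → u = v)
    (hbot : ¬ Reachable P.endsRed (P.redOf T) v ⊥)
    {w : P.W} (h : Reachable P.endsB (T.erase (P.t0Edge v)) (P.liftW v) w) :
    ∃ u, Reachable P.endsRed (P.redOf T) v u ∧ w = P.liftW u := by
  refine h.mem_of_closed (S := fun w => ∃ u, Reachable P.endsRed (P.redOf T) v u ∧ w = P.liftW u)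
    (fun a b ⟨g, hg, hab⟩ ⟨u, hu, hau⟩ => ?_) ⟨v, .refl _ v, rfl⟩
  subst hau
  obtain ⟨hgv, hgT⟩ := Finset.mem_erase.1 hg
  rcases P.eq_t0Edge_or_eq_redToEB g with ⟨u', rfl⟩ | ⟨r, rfl⟩
  · rw [endsB_t0Edge] at hab
    rcases Sym2.eq_iff.1 hab with ⟨hu', -⟩ | ⟨-, hu'⟩
    · exact absurd (P.eq_bot_of_liftW_eq_t0Parent hu'.symm ▸ hu) hbot
    · -- the only connecting vertex of `C` is `v`, whose edge to `T₀` has been removed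
      obtain rfl := WithBot.coe_injective hu'
      have hu0 : u' ≠ ⊥ := fun h => hbot (h ▸ hu)
      exact absurd (congrArg P.t0Edge (honly u' hu (P.connVertex_of_t0Edge_mem hu0 hgT))) hgv
  · obtain ⟨c, d, hcd⟩ : ∃ c d, P.endsRed r = s(c, d) :=
      Sym2.inductionOn (P.endsRed r) fun c d => ⟨c, d, rfl⟩
    have hr : Reachable P.endsRed (P.redOf T) c d := .single ⟨r, by simpa [redOf] using hgT, hcd⟩
    rw [endsB_redToEB, hcd, Sym2.map_mk] at hab
    rcases Sym2.eq_iff.1 hab with ⟨hc, rfl⟩ | ⟨rfl, hd⟩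
    · exact ⟨d, (WithBot.coe_injective hc ▸ hu).trans hr, rfl⟩
    · exact ⟨c, (WithBot.coe_injective hd ▸ hu).trans hr.symm, rfl⟩

theorem reachable_erase_t0Parent (hT : IsSpanningTree P.endsB T) (he : P.t0Edge v ∈ T)
    (honly : ∀ u, Reachable P.endsRed (P.redOf T) v u → P.ConnVertex T u → u = v)
    (huv : u < v) :
    Reachable P.endsB (T.erase (P.t0Edge v)) (P.t0Parent v) (P.t0Parent u) := by
  by_cases hbot : Reachable P.endsRed (P.redOf T) v ⊥
  · -- then `v ∈ A`, as `T` has no cycle through `0̄` and `v`, so both parents are `0`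
    have hv : P.t0Parent v = ⊥ := by
      refine (P.t0Parent_eq_bot_or v).resolve_right fun hv => ?_
      refine hT.1 _ he _ _ (P.endsB_t0Edge v) ?_
      rw [hv]
      exact (reachable_erase_t0Edge_liftW hbot).symm
    rw [hv, le_bot_iff.1 ((P.t0Parent_mono huv.le).trans_eq hv)]
    exact .refl _ _
  · rcases hT.reachable_erase_or (P.endsB_t0Edge v) (P.t0Parent u) with h | h
    · exact h
    · obtain ⟨w, hw, hwu⟩ := exists_eq_liftW_of_reachable_erase_t0Edge honly hbot h
      exact absurd (P.eq_bot_of_liftW_eq_t0Parent hwu.symm ▸ hw) hbot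

theorem lexEnds_t0Edge_lt_of_endsB (hv : v ≠ ⊥) {p : P.W} (hf : P.endsB f = s(p, P.liftW u))
    (hvu : v ≤ u) (hne : f ≠ P.t0Edge v) : P.lexEnds (P.t0Edge v) < P.lexEnds f := by
  rcases P.eq_t0Edge_or_eq_redToEB f with ⟨u', rfl⟩ | ⟨r, rfl⟩
  · rw [endsB_t0Edge] at hf
    rcases Sym2.eq_iff.1 hf with ⟨-, hu⟩ | ⟨hu, -⟩
    · obtain rfl := WithBot.coe_injective hu
      exact lexEnds_t0Edge_lt (hvu.lt_of_ne fun h => hne (h ▸ rfl))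
    · exact absurd (le_bot_iff.1 (P.eq_bot_of_liftW_eq_t0Parent hu.symm ▸ hvu)) hv
  · obtain ⟨c, d, hcd, rfl⟩ : ∃ c d, P.endsRed r = s(c, d) ∧ u = d := by
      obtain ⟨c, d, hcd⟩ : ∃ c d, P.endsRed r = s(c, d) :=
        Sym2.inductionOn (P.endsRed r) fun c d => ⟨c, d, rfl⟩
      rw [endsB_redToEB, hcd, Sym2.map_mk] at hf
      rcases Sym2.eq_iff.1 hf with ⟨-, hd⟩ | ⟨hc, -⟩
      exacts [⟨c, d, hcd, (WithBot.coe_injective hd).symm⟩,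
        ⟨d, c, hcd.trans Sym2.eq_swap, (WithBot.coe_injective hc).symm⟩]
    rw [lexEnds_t0Edge, lexEnds_eq (by rw [endsB_redToEB, hcd, Sym2.map_mk])]
    have hc : P.t0Parent v < P.liftW c :=
      (P.t0Parent_mono hvu).trans_lt (t0Parent_lt_of_endsRed hcd)
    have hu : P.t0Parent v < P.liftW u :=
      (P.t0Parent_lt_liftW v).trans_le (WithBot.coe_le_coe.2 hvu)
    refine Prod.Lex.toLex_lt_toLex.2 (Or.inl ?_)
    rcases le_total (P.liftW c) (P.liftW u) with h | h
    exacts [hc.trans_eq (inf_eq_left.2 h).symm, hu.trans_eq (inf_eq_right.2 h).symm]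

end BiconedGraph

/-- Let `T` be a spanning tree of `G^{A,B}` and `e` a
connecting edge of `T` with connecting vertex `v` such that the component `C`
of `v` in `T \\ T₀` contains no connecting vertex other than `v`.  Then `e` is
internally active in `T` iff `v` is the smallest vertex of `C`. -/
theorem connEdge_active_iff_smallest (P : BiconedGraph)
    (ord : LinearOrder P.EB) (hord : P.AdmissibleOrder ord)
    (T : Finset P.EB) (hT : IsSpanningTree P.endsB T)
    (e : P.EB) (v : P.Vred) (hce : P.ConnEdge T e v)
    (honly : ∀ u : P.Vred, Reachable P.endsRed (P.redOf T) v u →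
      P.ConnVertex T u → u = v) :
    P.InternallyActive ord T e ↔
      (∀ u : P.Vred, Reachable P.endsRed (P.redOf T) v u → v ≤ u) := by
  let _ : LinearOrder P.EB := ord
  have heT := hce.1
  obtain ⟨rfl, hv⟩ := hce.eq_t0Edge
  have hxy := P.endsB_t0Edge v
  constructor
  · rintro ⟨-, hactive⟩ u hu
    by_contra! huv
    exact hactive ⟨P.t0Edge u, hord _ _ (BiconedGraph.lexEnds_t0Edge_lt huv),
      hT.exchange heT hxy (P.endsB_t0Edge u) (P.reachable_erase_t0Parent hT heT honly huv)
        (BiconedGraph.reachable_erase_t0Edge_liftW hu)⟩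
  · refine fun hmin => ⟨heT, fun ⟨f, hfe, hT'⟩ => ?_⟩
    have hbot : ¬ Reachable P.endsRed (P.redOf T) v ⊥ := fun h => hv (le_bot_iff.1 (hmin ⊥ h))
    obtain ⟨p, q, hf, hq⟩ := hT.exists_reachable_erase_of_exchange heT hxy hT'
    obtain ⟨u, hu, rfl⟩ := BiconedGraph.exists_eq_liftW_of_reachable_erase_t0Edge honly hbot hq
    exact lt_asymm hfe (hord _ _
      (BiconedGraph.lexEnds_t0Edge_lt_of_endsB hv hf (hmin u hu) hfe.ne))

end

end BiconedPaper
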